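/- arXiv:1805.03847 — 3 statements merged into one kernel-verified Lean document; each statement's English description precedes it below -/
import Mathlib

section
/- Let Γ ⊆ ℝⁿ be open and convex, S ⊆ Γ convex, f : Γ → ℝ continuously differentiable and quasiconvex. Let x̄ be a global minimizer of f on S with ∇f(x̄) ≠ 0. Then S̄ = {x ∈ S | ⟨∇f(x), x̄ − x⟩ = 0 and ∇f(x) ≠ 0}. -/
/-!
For differentiable quasiconvex `f`, `f a ≤ f b` forces `⟨∇f b, a - b⟩ ≤ 0`, since `b` maximizes `f`
on the convex sublevel set `{f ≤ f b}`; if `f a < f b` and `∇f b ≠ 0` the inequality is strict,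
because `a` may be pushed slightly in an ascent direction without leaving `{f < f b}`. With the
first-order condition at a minimizer this gives `⟨∇f x, x̄ - x⟩ = 0` for every minimizer `x`, and
conversely a point with this property and `∇f x ≠ 0` cannot lie above the minimal value.

It remains to see `∇f x ≠ 0` at a minimizer `x`. Near `x̄`, strict differentiability makes `f` grow
at a uniform linear rate `c` along a direction `v` with `⟨∇f x̄, v⟩ > 0`. Take `z = x̄ + θ (x - x̄)`
close to `x̄`; then `z + θρ v` lies on the segment from `x̄` to `x + ρ v`, so quasiconvexity gives
`f (x + ρ v) ≥ f z + θρ c ≥ f x + θρ c`, and the derivative of `f` at `x` along `v` is positive.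
-/

open Set Filter Topology

theorem gradient_eq_zero_iff_fderiv_eq_zero {F : Type*} [NormedAddCommGroup F]
    [InnerProductSpace ℝ F] [CompleteSpace F] {f : F → ℝ} {x : F} :
    gradient f x = 0 ↔ fderiv ℝ f x = 0 := by
  rw [← toDual_gradient, map_eq_zero_iff _ (InnerProductSpace.toDual ℝ F).injective]

section

variable {E : Type*} [NormedAddCommGroup E] [NormedSpace ℝ E] {f : E → ℝ} {f' : E →L[ℝ] ℝ}
  {s : Set E}

theorem tendsto_add_smul_nhdsGT_zero (x v : E) :
    Tendsto (fun t : ℝ => x + t • v) (𝓝[>] 0) (𝓝 x) := by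
  have : Tendsto (fun t : ℝ => x + t • v) (𝓝 0) (𝓝 (x + (0 : ℝ) • v)) :=
    Continuous.tendsto (by fun_prop) 0
  simpa using this.mono_left nhdsWithin_le_nhds

theorem IsMaxOn.hasFDerivAt_sub_nonpos {a b : E} (hs : Convex ℝ s)
    (hmax : IsMaxOn f s b) (ha : a ∈ s) (hb : b ∈ s) (hf : HasFDerivAt f f' b) :
    f' (a - b) ≤ 0 :=
  hmax.localize.hasFDerivWithinAt_nonpos hf.hasFDerivWithinAt
    (sub_mem_posTangentConeAt_of_segment_subset (hs.segment_subset hb ha))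

theorem IsMinOn.hasFDerivAt_sub_nonneg {a b : E} (hs : Convex ℝ s)
    (hmin : IsMinOn f s b) (ha : a ∈ s) (hb : b ∈ s) (hf : HasFDerivAt f f' b) :
    0 ≤ f' (a - b) :=
  hmin.localize.hasFDerivWithinAt_nonneg hf.hasFDerivWithinAt
    (sub_mem_posTangentConeAt_of_segment_subset (hs.segment_subset hb ha))

theorem HasFDerivAt.le_apply_of_eventually_add_mul_le {x v : E} {c : ℝ}
    (hf : HasFDerivAt f f' x) (h : ∀ᶠ s in 𝓝[>] (0 : ℝ), f x + s * c ≤ f (x + s • v)) :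
    c ≤ f' v := by
  have hline : HasDerivAt (fun s : ℝ => x + s • v) v 0 := by
    simpa using ((hasDerivAt_id (0 : ℝ)).smul_const v).const_add x
  have hd : HasDerivAt (fun s : ℝ => f (x + s • v)) (f' v) 0 :=
    hf.comp_hasDerivAt_of_eq 0 hline (by simp)
  refine ge_of_tendsto ((hasDerivAt_iff_tendsto_slope.mp hd).mono_left (nhdsGT_le_nhdsNE 0)) ?_
  filter_upwards [h, self_mem_nhdsWithin] with s hs (hs0 : 0 < s)
  rw [slope_def_field, le_div_iff₀ (by simpa using hs0)]
  simp only [zero_smul, add_zero, sub_zero]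
  linarith

theorem ContinuousLinearMap.exists_apply_pos (hf' : f' ≠ 0) : ∃ v, 0 < f' v := by
  obtain ⟨v, hv⟩ := DFunLike.ne_iff.mp hf'
  rcases (show f' v ≠ 0 from hv).lt_or_gt with h | h
  · exact ⟨-v, by simpa using h⟩
  · exact ⟨v, h⟩

theorem HasStrictFDerivAt.eventually_eventually_add_mul_le {x₀ v : E}
    (hf : HasStrictFDerivAt f f' x₀) (hv : 0 < f' v) :
    ∀ᶠ z in 𝓝 x₀, ∀ᶠ s in 𝓝[>] (0 : ℝ), f z + s * (f' v / 2) ≤ f (z + s • v) := by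
  set ε := f' v / (2 * (‖v‖ + 1))
  have hε : 0 < ε := by positivity
  have hsmall := hf.isLittleO.def hε
  rw [nhds_prod_eq] at hsmall
  obtain ⟨t, ht, hbound⟩ := eventually_prod_self_iff'.mp hsmall
  filter_upwards [eventually_eventually_nhds.mpr ht, ht] with z hz hzt
  filter_upwards [(tendsto_add_smul_nhdsGT_zero z v).eventually hz, self_mem_nhdsWithin]
    with s hst (hs : 0 < s)
  have h := hbound _ hst z hzt
  simp only [add_sub_cancel_left, map_smul, smul_eq_mul, norm_smul, Real.norm_of_nonneg hs.le] at h
  have hεv : ε * ‖v‖ ≤ f' v / 2 := by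
    rw [div_mul_eq_mul_div, div_le_div_iff₀ (by positivity) two_pos]
    nlinarith [norm_nonneg v]
  have := (abs_le.mp (Real.norm_eq_abs _ ▸ h)).1
  nlinarith

theorem quasiconvexOn_of_add_smul_sub_le_max (hs : Convex ℝ s)
    (h : ∀ x ∈ s, ∀ y ∈ s, ∀ t ∈ Icc (0 : ℝ) 1, f (x + t • (y - x)) ≤ max (f x) (f y)) :
    QuasiconvexOn ℝ s f := by
  refine quasiconvexOn_iff_le_max.mpr ⟨hs, fun x hx y hy a b ha hb hab => ?_⟩
  have hcomb : a • x + b • y = x + b • (y - x) := by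
    rw [eq_sub_of_add_eq hab]; module
  exact hcomb ▸ h x hx y hy b ⟨hb, by linarith⟩

theorem QuasiconvexOn.hasFDerivAt_sub_nonpos {a b : E} (hqc : QuasiconvexOn ℝ s f)
    (ha : a ∈ s) (hb : b ∈ s) (hab : f a ≤ f b) (hf : HasFDerivAt f f' b) :
    f' (a - b) ≤ 0 :=
  IsMaxOn.hasFDerivAt_sub_nonpos (hqc (f b)) (fun _ hy => hy.2) ⟨ha, hab⟩ ⟨hb, le_rfl⟩ hf

theorem QuasiconvexOn.hasFDerivAt_sub_neg {a b : E} (hqc : QuasiconvexOn ℝ s f)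
    (ha : s ∈ 𝓝 a) (hfa : ContinuousAt f a) (hb : b ∈ s) (hab : f a < f b)
    (hf : HasFDerivAt f f' b) (hf' : f' ≠ 0) :
    f' (a - b) < 0 := by
  obtain ⟨v, hv⟩ := f'.exists_apply_pos hf'
  have hline := tendsto_add_smul_nhdsGT_zero a v
  obtain ⟨δ, ⟨hδs, hδlt⟩, hδ⟩ := (((hline.eventually ha).and
    (hline.eventually (hfa.eventually_lt_const hab))).and self_mem_nhdsWithin).exists
  have h := hqc.hasFDerivAt_sub_nonpos hδs hb hδlt.le hf
  rw [add_sub_right_comm, map_add, map_smul, smul_eq_mul] at h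
  nlinarith [mul_pos (show (0 : ℝ) < δ from hδ) hv]

theorem QuasiconvexOn.hasFDerivAt_ne_zero_of_isMinOn {S : Set E} {x xb : E} {f'x : E →L[ℝ] ℝ}
    (hqc : QuasiconvexOn ℝ s f) (hs : s ∈ 𝓝 x) (hS : Convex ℝ S) (hSs : S ⊆ s)
    (hxS : x ∈ S) (hxbS : xb ∈ S) (hx : IsMinOn f S x) (hxb : IsMinOn f S xb)
    (hfx : HasFDerivAt f f'x x) (hfxb : HasStrictFDerivAt f f' xb) (hf' : f' ≠ 0) :
    f'x ≠ 0 := by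
  rintro rfl
  obtain ⟨v, hv⟩ := f'.exists_apply_pos hf'
  obtain ⟨θ, hθgrow, hθ⟩ := (((tendsto_add_smul_nhdsGT_zero xb (x - xb)).eventually
    (hfxb.eventually_eventually_add_mul_le hv)).and (Ioo_mem_nhdsGT one_pos)).exists
  set z := xb + θ • (x - xb)
  have hfz : f x ≤ f z := hx (hS.add_smul_sub_mem hxbS hxS (Ioo_subset_Icc_self hθ))
  have hfeq : f xb = f x := le_antisymm (hxb hxS) (hx hxbS)
  suffices ∀ᶠ ρ in 𝓝[>] (0 : ℝ), f x + ρ * (θ * (f' v / 2)) ≤ f (x + ρ • v) by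
    have := hfx.le_apply_of_eventually_add_mul_le this
    simp only [zero_apply] at this
    nlinarith [hθ.1]
  have hscale : Tendsto (fun ρ : ℝ => θ * ρ) (𝓝[>] 0) (𝓝[>] 0) := by
    refine tendsto_nhdsWithin_iff.mpr ⟨?_, ?_⟩
    · simpa using ((continuous_const_mul θ).tendsto 0).mono_left nhdsWithin_le_nhds
    · filter_upwards [self_mem_nhdsWithin] with ρ (hρ : 0 < ρ)
      exact mul_pos hθ.1 hρ
  filter_upwards [hscale.eventually hθgrow, (tendsto_add_smul_nhdsGT_zero x v).eventually hs,
    self_mem_nhdsWithin] with ρ hgrow hρs (hρ : 0 < ρ)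
  have hcomb : z + (θ * ρ) • v = (1 - θ) • xb + θ • (x + ρ • v) := by module
  have hmax := (quasiconvexOn_iff_le_max.mp hqc).2 (hSs hxbS) hρs (sub_nonneg.mpr hθ.2.le)
    hθ.1.le (sub_add_cancel 1 θ)
  rw [← hcomb] at hmax
  have hgain : 0 < θ * ρ * (f' v / 2) := by have := hθ.1; positivity
  rcases le_max_iff.mp (hgrow.trans hmax) with h | h <;> nlinarith

theorem QuasiconvexOn.isMinOn_iff_fderiv_sub_eq_zero {Γ S : Set E} {x xb : E} (hΓ : IsOpen Γ)
    (hqc : QuasiconvexOn ℝ Γ f) (hC1 : ContDiffOn ℝ 1 f Γ) (hS : Convex ℝ S) (hSΓ : S ⊆ Γ)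
    (hxbS : xb ∈ S) (hxb : IsMinOn f S xb) (hfxb : fderiv ℝ f xb ≠ 0) (hxS : x ∈ S) :
    IsMinOn f S x ↔ fderiv ℝ f x (xb - x) = 0 ∧ fderiv ℝ f x ≠ 0 := by
  have hC1at : ∀ {z}, z ∈ S → ContDiffAt ℝ 1 f z := fun hz =>
    hC1.contDiffAt (hΓ.mem_nhds (hSΓ hz))
  have hfx := ((hC1at hxS).differentiableAt one_ne_zero).hasFDerivAt
  constructor
  · intro hx
    refine ⟨le_antisymm ?_ ?_, ?_⟩
    · exact hqc.hasFDerivAt_sub_nonpos (hSΓ hxbS) (hSΓ hxS) (hxb hxS) hfx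
    · exact hx.hasFDerivAt_sub_nonneg hS hxbS hxS hfx
    · exact hqc.hasFDerivAt_ne_zero_of_isMinOn (hΓ.mem_nhds (hSΓ hxS)) hS hSΓ hxS hxbS hx hxb hfx
        ((hC1at hxbS).hasStrictFDerivAt one_ne_zero) hfxb
  · rintro ⟨hzero, hne⟩ y hy
    have hle : f x ≤ f xb := not_lt.mp fun hlt =>
      (hqc.hasFDerivAt_sub_neg (hΓ.mem_nhds (hSΓ hxbS)) (hC1at hxbS).continuousAt (hSΓ hxS)
        hlt hfx hne).ne hzero
    exact hle.trans (hxb hy)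

end

theorem stmt_9 {n : ℕ} (Γ S : Set (EuclideanSpace ℝ (Fin n)))
    (hΓo : IsOpen Γ) (hΓ : Convex ℝ Γ) (hS : Convex ℝ S) (hSΓ : S ⊆ Γ)
    (f : EuclideanSpace ℝ (Fin n) → ℝ)
    (hC1 : ContDiffOn ℝ 1 f Γ)
    (hqc : ∀ x ∈ Γ, ∀ y ∈ Γ, ∀ t ∈ Set.Icc (0:ℝ) 1,
        f (x + t • (y - x)) ≤ max (f x) (f y))
    (Sbar : Set (EuclideanSpace ℝ (Fin n)))
    (hSbar : Sbar = {x ∈ S | ∀ y ∈ S, f x ≤ f y})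
    (xb : EuclideanSpace ℝ (Fin n)) (hxb : xb ∈ Sbar)
    (hgxb : gradient f xb ≠ 0) :
    Sbar = {x ∈ S | (inner ℝ (gradient f x) (xb - x) : ℝ) = 0 ∧ gradient f x ≠ 0} := by
  subst hSbar
  have hqc' := quasiconvexOn_of_add_smul_sub_le_max hΓ hqc
  rw [Ne, gradient_eq_zero_iff_fderiv_eq_zero] at hgxb
  ext x
  simp only [mem_ofPred_eq, inner_gradient_left, Ne, gradient_eq_zero_iff_fderiv_eq_zero]
  refine and_congr_right fun hxS => ?_
  exact hqc'.isMinOn_iff_fderiv_sub_eq_zero hΓo hC1 hS hSΓ hxb.1 hxb.2 hgxb hxS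
end

section
/- Let Γ ⊆ ℝⁿ be open and convex, S ⊆ Γ convex, f : Γ → ℝ continuously differentiable and quasiconvex. Let x̄ be a global minimizer of f on S with ∇f(x̄) ≠ 0. Then S̄ = {x ∈ S | ⟨∇f(x), x̄ − x⟩ ≥ 0 and ∇f(x) ≠ 0}. -/
/-!
Everything follows from comparing difference quotients of `f` along lines. For a differentiable
quasiconvex `f`, `f y ≤ f x` forces `⟪∇f x, y - x⟫ ≤ 0`, which gives `⊇`.

For `⊆`, minimizers `x` of `f` on `S` span with `x̄` a segment on which `f` is constant. On such a
level segment `[a, b]`, quasiconvexity at the midpoint propagates `⟪∇f a, v⟫ ≤ 0` to the midpoint;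
iterating towards `b` and using continuity of `∇f`, `∇f x = 0` would give `‖∇f x̄‖² ≤ 0`.
-/

open Filter Set Topology
open scoped Gradient RealInnerProductSpace

theorem quasiconvexOn_of_le_max_add_smul_sub {E β : Type*} [AddCommGroup E] [Module ℝ E]
    [LinearOrder β] {s : Set E} {f : E → β} (hs : Convex ℝ s)
    (h : ∀ x ∈ s, ∀ y ∈ s, ∀ t ∈ Icc (0 : ℝ) 1, f (x + t • (y - x)) ≤ max (f x) (f y)) :
    QuasiconvexOn ℝ s f := by
  refine quasiconvexOn_iff_le_max.2 ⟨hs, fun x hx y hy a b ha hb hab => ?_⟩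
  obtain rfl : a = 1 - b := by linarith
  convert h x hx y hy b ⟨hb, by linarith⟩ using 2
  module

theorem QuasiconvexOn.le_max_of_mem_segment {E β : Type*} [AddCommGroup E] [Module ℝ E]
    [LinearOrder β] {s : Set E} {f : E → β} (hf : QuasiconvexOn ℝ s f) {x y z : E}
    (hx : x ∈ s) (hy : y ∈ s) (hz : z ∈ segment ℝ x y) : f z ≤ max (f x) (f y) :=
  ((hf _).segment_subset ⟨hx, le_max_left _ _⟩ ⟨hy, le_max_right _ _⟩ hz).2

theorem eventually_add_smul_sub_mem_segment {E : Type*} [AddCommGroup E] [Module ℝ E] (x y : E) :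
    ∀ᶠ ε in 𝓝[>] (0 : ℝ), x + ε • (y - x) ∈ segment ℝ x y := by
  filter_upwards [Ioo_mem_nhdsGT (zero_lt_one' ℝ)] with ε hε
  rw [segment_eq_image']
  exact ⟨ε, Ioo_subset_Icc_self hε, rfl⟩

theorem tendsto_max_zero_div_nhdsGT {a : ℝ → ℝ} {D : ℝ}
    (h : Tendsto (fun ε => a ε / ε) (𝓝[>] 0) (𝓝 D)) :
    Tendsto (fun ε => max (a ε) 0 / ε) (𝓝[>] 0) (𝓝 (max D 0)) := by
  refine (h.max tendsto_const_nhds).congr' ?_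
  filter_upwards [self_mem_nhdsWithin] with ε hε
  rw [← max_div_div_right (le_of_lt hε), zero_div]

section TopologicalVectorSpace

variable {E : Type*} [AddCommGroup E] [Module ℝ E] [TopologicalSpace E]
  [IsTopologicalAddGroup E] [ContinuousSMul ℝ E]

theorem isCompact_segment (x y : E) : IsCompact (segment ℝ x y) := by
  rw [segment_eq_image']
  exact isCompact_Icc.image (by fun_prop)

theorem tendsto_add_smul_nhdsGT (p v : E) :
    Tendsto (fun ε : ℝ => p + ε • v) (𝓝[>] 0) (𝓝 p) := by
  have : Tendsto (fun ε : ℝ => p + ε • v) (𝓝 0) (𝓝 (p + (0 : ℝ) • v)) :=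
    tendsto_const_nhds.add (tendsto_id.smul_const v)
  simpa using this.mono_left nhdsWithin_le_nhds

theorem mem_of_isClosed_of_midpoint_mem {C : Set E} (hC : IsClosed C) {a b : E} (ha : a ∈ C)
    (h : ∀ z ∈ C, midpoint ℝ z b ∈ C) : b ∈ C := by
  have hmem : ∀ k : ℕ, b + (2⁻¹ : ℝ) ^ k • (a - b) ∈ C := by
    intro k
    induction k with
    | zero => simpa using ha
    | succ k ih =>
      convert h _ ih using 1
      rw [midpoint_eq_smul_add, invOf_eq_inv, pow_succ]
      module
  have hlim : Tendsto (fun k : ℕ => b + (2⁻¹ : ℝ) ^ k • (a - b)) atTop (𝓝 b) := by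
    have := ((tendsto_pow_atTop_nhds_zero_of_lt_one (by norm_num : (0 : ℝ) ≤ 2⁻¹)
      (by norm_num)).smul_const (a - b)).const_add b
    simpa using this
  exact hC.mem_of_tendsto hlim (Eventually.of_forall hmem)

end TopologicalVectorSpace

section Gradient

variable {F : Type*} [NormedAddCommGroup F] [InnerProductSpace ℝ F] [CompleteSpace F]
  {f : F → ℝ} {Γ : Set F}

theorem ContDiffOn.continuousOn_gradient (hf : ContDiffOn ℝ 1 f Γ) (hΓ : IsOpen Γ) :
    ContinuousOn (∇ f) Γ :=
  (InnerProductSpace.toDual ℝ F).symm.continuous.comp_continuousOn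
    (hf.continuousOn_fderiv_of_isOpen hΓ le_rfl)

theorem DifferentiableAt.tendsto_slope_line {p : F} (hd : DifferentiableAt ℝ f p) (v : F) :
    Tendsto (fun ε : ℝ => (f (p + ε • v) - f p) / ε) (𝓝[>] 0) (𝓝 ⟪∇ f p, v⟫) := by
  have hline : HasDerivAt (fun ε : ℝ => p + ε • v) v 0 := by
    simpa using ((hasDerivAt_id (0 : ℝ)).smul_const v).const_add p
  have := (hd.hasFDerivAt.comp_hasDerivAt_of_eq 0 hline (by simp)).tendsto_slope_zero_right
  simpa [div_eq_inv_mul] using this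

theorem DifferentiableAt.inner_gradient_nonpos_of_eventually_le {p v : F}
    (hd : DifferentiableAt ℝ f p) (h : ∀ᶠ ε in 𝓝[>] (0 : ℝ), f (p + ε • v) ≤ f p) :
    ⟪∇ f p, v⟫ ≤ 0 := by
  refine le_of_tendsto (hd.tendsto_slope_line v) ?_
  filter_upwards [h, self_mem_nhdsWithin] with ε hε hpos
  exact div_nonpos_of_nonpos_of_nonneg (sub_nonpos.2 hε) (le_of_lt hpos)

theorem DifferentiableAt.inner_gradient_nonneg_of_eventually_le {p v : F}
    (hd : DifferentiableAt ℝ f p) (h : ∀ᶠ ε in 𝓝[>] (0 : ℝ), f p ≤ f (p + ε • v)) :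
    0 ≤ ⟪∇ f p, v⟫ := by
  refine ge_of_tendsto (hd.tendsto_slope_line v) ?_
  filter_upwards [h, self_mem_nhdsWithin] with ε hε hpos
  exact div_nonneg (sub_nonneg.2 hε) (le_of_lt hpos)

theorem IsMinOn.inner_gradient_sub_nonneg {x y : F} (hd : DifferentiableAt ℝ f x)
    (h : IsMinOn f (segment ℝ x y) x) : 0 ≤ ⟪∇ f x, y - x⟫ :=
  hd.inner_gradient_nonneg_of_eventually_le
    ((eventually_add_smul_sub_mem_segment x y).mono fun _ hε => h hε)

theorem QuasiconvexOn.inner_gradient_sub_nonpos (hf : QuasiconvexOn ℝ Γ f) {x y : F}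
    (hx : x ∈ Γ) (hy : y ∈ Γ) (hd : DifferentiableAt ℝ f x) (hxy : f y ≤ f x) :
    ⟪∇ f x, y - x⟫ ≤ 0 := by
  refine hd.inner_gradient_nonpos_of_eventually_le
    ((eventually_add_smul_sub_mem_segment x y).mono fun _ hε => ?_)
  simpa [max_eq_left hxy] using hf.le_max_of_mem_segment hx hy hε

/-- If `f y < f x`, a point `w` slightly beyond `y` along `∇f x` still has `f w < f x`, while
`⟪∇f x, w - x⟫ > 0`; this contradicts `QuasiconvexOn.inner_gradient_sub_nonpos`. -/
theorem QuasiconvexOn.le_of_inner_gradient_sub_nonneg (hf : QuasiconvexOn ℝ Γ f)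
    (hΓ : IsOpen Γ) {x y : F} (hx : x ∈ Γ) (hy : y ∈ Γ) (hd : DifferentiableAt ℝ f x)
    (hc : ContinuousAt f y) (hg : ∇ f x ≠ 0) (hxy : 0 ≤ ⟪∇ f x, y - x⟫) : f x ≤ f y := by
  by_contra! hlt
  have hpush := tendsto_add_smul_nhdsGT y (∇ f x)
  obtain ⟨ρ, hρ, hwΓ, hfw⟩ : ∃ ρ : ℝ, 0 < ρ ∧ y + ρ • ∇ f x ∈ Γ ∧ f (y + ρ • ∇ f x) < f x :=
    (eventually_mem_nhdsWithin.and ((hpush.eventually (hΓ.mem_nhds hy)).and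
      (hpush.eventually (hc.eventually (gt_mem_nhds hlt))))).exists
  have hnonpos := hf.inner_gradient_sub_nonpos hx hwΓ hd hfw.le
  rw [show y + ρ • ∇ f x - x = (y - x) + ρ • ∇ f x by abel, inner_add_right,
    real_inner_smul_right, real_inner_self_eq_norm_sq] at hnonpos
  nlinarith [mul_pos hρ (pow_pos (norm_pos_iff.2 hg) 2)]

/-- Quasiconvexity at the midpoint gives `f (m + ε • v / 2) ≤ max (f (a + ε • v)) (f b)`,
so the slope at `m` in direction `v / 2` is at most the positive part of the slope at `a`. -/
theorem QuasiconvexOn.inner_gradient_midpoint_nonpos (hf : QuasiconvexOn ℝ Γ f) (hΓ : IsOpen Γ)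
    {a b v : F} (ha : a ∈ Γ) (hb : b ∈ Γ) (hfa : f a ≤ f (midpoint ℝ a b))
    (hfb : f b ≤ f (midpoint ℝ a b)) (hda : DifferentiableAt ℝ f a)
    (hdm : DifferentiableAt ℝ f (midpoint ℝ a b)) (hv : ⟪∇ f a, v⟫ ≤ 0) :
    ⟪∇ f (midpoint ℝ a b), v⟫ ≤ 0 := by
  set m := midpoint ℝ a b
  have hslope_a := tendsto_max_zero_div_nhdsGT (hda.tendsto_slope_line v)
  rw [max_eq_right hv] at hslope_a
  have hline_a : ∀ᶠ ε in 𝓝[>] (0 : ℝ), a + ε • v ∈ Γ :=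
    (tendsto_add_smul_nhdsGT a v).eventually (hΓ.mem_nhds ha)
  have hcompare : ∀ᶠ ε in 𝓝[>] (0 : ℝ), (f (m + ε • (2⁻¹ : ℝ) • v) - f m) / ε ≤
      max (f (a + ε • v) - f a) 0 / ε := by
    filter_upwards [hline_a, self_mem_nhdsWithin] with ε hε hpos
    have hmid : midpoint ℝ (a + ε • v) b = m + ε • (2⁻¹ : ℝ) • v := by
      simp only [m, midpoint_eq_smul_add, invOf_eq_inv]
      module
    have hq := hf.le_max_of_mem_segment hε hb (midpoint_mem_segment _ _)
    rw [hmid] at hq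
    refine div_le_div_of_nonneg_right ?_ (le_of_lt hpos)
    rcases le_max_iff.1 hq with h | h
    · exact le_max_of_le_left (by linarith)
    · exact le_max_of_le_right (by linarith)
  have := le_of_tendsto_of_tendsto (hdm.tendsto_slope_line _) hslope_a hcompare
  rw [real_inner_smul_right] at this
  linarith

theorem QuasiconvexOn.inner_gradient_nonpos_of_level_segment (hf : QuasiconvexOn ℝ Γ f)
    (hΓ : IsOpen Γ) (hC1 : ContDiffOn ℝ 1 f Γ) {x y v : F} (hxy : segment ℝ x y ⊆ Γ)
    (hlevel : ∀ z ∈ segment ℝ x y, f z = f y) (hv : ⟪∇ f x, v⟫ ≤ 0) : ⟪∇ f y, v⟫ ≤ 0 := by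
  have hd : ∀ z ∈ Γ, DifferentiableAt ℝ f z := fun z hz =>
    (hC1.differentiableOn one_ne_zero).differentiableAt (hΓ.mem_nhds hz)
  have hclosed : IsClosed (segment ℝ x y ∩ (fun z => ⟪∇ f z, v⟫) ⁻¹' Iic 0) :=
    (((hC1.continuousOn_gradient hΓ).mono hxy).inner continuousOn_const
      ).preimage_isClosed_of_isClosed (isCompact_segment x y).isClosed isClosed_Iic
  refine (mem_of_isClosed_of_midpoint_mem hclosed ⟨left_mem_segment ℝ x y, hv⟩
    fun z ⟨hz, hzv⟩ => ?_).2
  have hm : midpoint ℝ z y ∈ segment ℝ x y :=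
    (convex_segment x y).segment_subset hz (right_mem_segment ℝ x y) (midpoint_mem_segment z y)
  refine ⟨hm, hf.inner_gradient_midpoint_nonpos hΓ (hxy hz) (hxy (right_mem_segment ℝ x y))
    ?_ ?_ (hd z (hxy hz)) (hd _ (hxy hm)) hzv⟩
  · rw [hlevel z hz, hlevel _ hm]
  · rw [hlevel _ hm]

end Gradient

theorem stmt_10 {n : ℕ} (Γ S : Set (EuclideanSpace ℝ (Fin n)))
    (hΓo : IsOpen Γ) (hΓ : Convex ℝ Γ) (hS : Convex ℝ S) (hSΓ : S ⊆ Γ)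
    (f : EuclideanSpace ℝ (Fin n) → ℝ)
    (hC1 : ContDiffOn ℝ 1 f Γ)
    (hqc : ∀ x ∈ Γ, ∀ y ∈ Γ, ∀ t ∈ Set.Icc (0:ℝ) 1,
        f (x + t • (y - x)) ≤ max (f x) (f y))
    (Sbar : Set (EuclideanSpace ℝ (Fin n)))
    (hSbar : Sbar = {x ∈ S | ∀ y ∈ S, f x ≤ f y})
    (xb : EuclideanSpace ℝ (Fin n)) (hxb : xb ∈ Sbar)
    (hgxb : gradient f xb ≠ 0) :
    Sbar = {x ∈ S | (inner ℝ (gradient f x) (xb - x) : ℝ) ≥ 0 ∧ gradient f x ≠ 0} := by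
  subst hSbar
  obtain ⟨hxbS, hxbmin⟩ := hxb
  have hqc' : QuasiconvexOn ℝ Γ f := quasiconvexOn_of_le_max_add_smul_sub hΓ hqc
  have hd : ∀ p ∈ Γ, DifferentiableAt ℝ f p := fun p hp =>
    (hC1.differentiableOn one_ne_zero).differentiableAt (hΓo.mem_nhds hp)
  ext x
  constructor
  · rintro ⟨hxS, hxmin⟩
    have hseg : segment ℝ x xb ⊆ S := hS.segment_subset hxS hxbS
    refine ⟨hxS, IsMinOn.inner_gradient_sub_nonneg (hd x (hSΓ hxS)) fun z hz => hxmin z (hseg hz),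
      fun hx0 => hgxb ?_⟩
    have hlevel : ∀ z ∈ segment ℝ x xb, f z = f xb := fun z hz =>
      le_antisymm ((hqc'.le_max_of_mem_segment (hSΓ hxS) (hSΓ hxbS) hz).trans
        (max_le (hxmin xb hxbS) le_rfl)) (hxbmin z (hseg hz))
    have := hqc'.inner_gradient_nonpos_of_level_segment hΓo hC1 (hseg.trans hSΓ) hlevel
      (v := ∇ f xb) (by simp [hx0])
    exact real_inner_self_nonpos.1 this
  · rintro ⟨hxS, hxb_x, hx0⟩
    refine ⟨hxS, fun z hz => le_trans ?_ (hxbmin z hz)⟩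
    exact hqc'.le_of_inner_gradient_sub_nonneg hΓo (hSΓ hxS) (hSΓ hxbS) (hd x (hSΓ hxS))
      (hd xb (hSΓ hxbS)).continuousAt hx0 hxb_x
end

section
/- Let Γ ⊆ ℝⁿ be open and convex, S ⊆ Γ convex, f : Γ → ℝ continuously differentiable and pseudoconvex on Γ, and let x̄ be a global minimizer of f on S. Then S̄ = {x ∈ S | ⟨∇f(x), x̄ − x⟩ ≥ 0}. -/
variable {E : Type*} [NormedAddCommGroup E] [InnerProductSpace ℝ E] [CompleteSpace E]

theorem IsMinOn.inner_gradient_sub_nonneg_s17 {f : E → ℝ} {S : Set E} {x y : E}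
    (hmin : IsMinOn f S x) (hS : Convex ℝ S) (hx : x ∈ S) (hy : y ∈ S)
    (hf : DifferentiableAt ℝ f x) :
    0 ≤ inner ℝ (gradient f x) (y - x) := by
  have hfd : HasFDerivAt f (InnerProductSpace.toDual ℝ E (gradient f x)) x :=
    hasGradientAt_iff_hasFDerivAt.mp hf.hasGradientAt
  have hcone : y - x ∈ posTangentConeAt S x :=
    sub_mem_posTangentConeAt_of_segment_subset (hS.segment_subset hx hy)
  simpa only [InnerProductSpace.toDual_apply_apply] using
    hmin.localize.hasFDerivWithinAt_nonneg hfd.hasFDerivWithinAt hcone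

def PseudoconvexOn (f : E → ℝ) (Γ : Set E) : Prop :=
  ∀ x ∈ Γ, ∀ y ∈ Γ, f y < f x → inner ℝ (gradient f x) (y - x) < 0

theorem PseudoconvexOn.le_of_inner_gradient_sub_nonneg {f : E → ℝ} {Γ : Set E}
    (hf : PseudoconvexOn f Γ) {x y : E} (hx : x ∈ Γ) (hy : y ∈ Γ)
    (hxy : 0 ≤ inner ℝ (gradient f x) (y - x)) : f x ≤ f y :=
  not_lt.mp fun h => (hf x hx y hy h).not_ge hxy

theorem stmt_17_general {n : ℕ} (Γ S : Set (EuclideanSpace ℝ (Fin n)))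
    (hΓo : IsOpen Γ) (hS : Convex ℝ S) (hSΓ : S ⊆ Γ)
    (f : EuclideanSpace ℝ (Fin n) → ℝ)
    (hC1 : ContDiffOn ℝ 1 f Γ)
    (hpc : ∀ x ∈ Γ, ∀ y ∈ Γ, f y < f x → (inner ℝ (gradient f x) (y - x) : ℝ) < 0)
    (Sbar : Set (EuclideanSpace ℝ (Fin n)))
    (hSbar : Sbar = {x ∈ S | ∀ y ∈ S, f x ≤ f y})
    (xb : EuclideanSpace ℝ (Fin n)) (hxb : xb ∈ Sbar) :
    Sbar = {x ∈ S | (inner ℝ (gradient f x) (xb - x) : ℝ) ≥ 0} := by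
  subst hSbar
  obtain ⟨hxbS, hxbmin⟩ := hxb
  ext x
  refine ⟨fun ⟨hxS, hxmin⟩ => ⟨hxS, ?_⟩, fun ⟨hxS, hxxb⟩ => ⟨hxS, fun y hy => ?_⟩⟩
  · have hdiff : DifferentiableAt ℝ f x :=
      (hC1.differentiableOn one_ne_zero).differentiableAt (hΓo.mem_nhds (hSΓ hxS))
    exact (isMinOn_iff.mpr hxmin).inner_gradient_sub_nonneg_s17 hS hxS hxbS hdiff
  · have hpc' : PseudoconvexOn f Γ := hpc
    exact (hpc'.le_of_inner_gradient_sub_nonneg (hSΓ hxS) (hSΓ hxbS) hxxb).trans (hxbmin y hy)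

theorem stmt_17 {n : ℕ} (Γ S : Set (EuclideanSpace ℝ (Fin n)))
    (hΓo : IsOpen Γ) (hΓ : Convex ℝ Γ) (hS : Convex ℝ S) (hSΓ : S ⊆ Γ)
    (f : EuclideanSpace ℝ (Fin n) → ℝ)
    (hC1 : ContDiffOn ℝ 1 f Γ)
    (hpc : ∀ x ∈ Γ, ∀ y ∈ Γ, f y < f x → (inner ℝ (gradient f x) (y - x) : ℝ) < 0)
    (Sbar : Set (EuclideanSpace ℝ (Fin n)))
    (hSbar : Sbar = {x ∈ S | ∀ y ∈ S, f x ≤ f y})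
    (xb : EuclideanSpace ℝ (Fin n)) (hxb : xb ∈ Sbar) :
    Sbar = {x ∈ S | (inner ℝ (gradient f x) (xb - x) : ℝ) ≥ 0} :=
  stmt_17_general Γ S hΓo hS hSΓ f hC1 hpc Sbar hSbar xb hxb
end
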